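/- Safety when ahead: suppose the ego car is ahead of the other car, both with velocities in [0, V], V > 0, A_max > 0, A_min > 0 with A_min ≤ A_max. If x_l + L ≤ x_e and (x_l - V·0) - (v_l - V)²/(2·A_max) + L < (x_e - V·0) - (v_e - V)²/(2·A_min), then for all t ≥ 0, when the ego car accelerates at A_min (speed clamped at V) and the other car accelerates at A_max (speed clamped at V), the separation x_e(t) - x_l(t) ≥ L is maintained. -/

import Mathlib

/-- Position of a car accelerating at rate `a`, speed saturating at `V`. -/
noncomputable def satPos (V x v a t : ℝ) : ℝ :=
  if t ≤ (V - v) / a then x + v * t + (a / 2) * t ^ 2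
  else x + v * ((V - v) / a) + (a / 2) * ((V - v) / a) ^ 2 + V * (t - (V - v) / a)

/-! A car that starts at speed `V - a T` and accelerates at rate `a` until it reaches `V` (at time
`T`) falls behind a car cruising at `V` by `lag a T t = a/2 (T² - ((T - t)⁺)²)` by time `t`.
The separation is therefore the initial gap minus the difference of the two lags. If the other car
has more lag still to come than the ego car at time `t`, then, because it accelerates at least as
hard, its speed deficit dominated the ego car's over all of `[0, t]`, so the ego car has lost no
ground yet. Otherwise the separation is at least its limit as `t → ∞`, which `hstop` bounds
from below by `L`. -/

noncomputable def lag (a T t : ℝ) : ℝ := a / 2 * (T ^ 2 - max (T - t) 0 ^ 2)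

theorem satPos_eq_sub_lag {V x v a : ℝ} (ha : a ≠ 0) (t : ℝ) :
    satPos V x v a t = x + V * t - lag a ((V - v) / a) t := by
  unfold satPos lag
  split_ifs with h
  · rw [max_eq_left (by linarith)]
    field_simp
    ring
  · rw [max_eq_right (by linarith)]
    field_simp
    ring

theorem lag_le_lag_of_remaining_lt {a b S T t : ℝ} (ha : 0 < a) (hab : a ≤ b) (hS : 0 ≤ S)
    (ht : 0 ≤ t) (h : a * max (S - t) 0 ^ 2 < b * max (T - t) 0 ^ 2) :
    lag a S t ≤ lag b T t := by
  have hb : 0 < b := ha.trans_le hab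
  have htT : t < T := by
    by_contra! hTt
    rw [max_eq_right (by linarith : T - t ≤ 0)] at h
    nlinarith [sq_nonneg (max (S - t) 0)]
  unfold lag
  rw [max_eq_left (by linarith : 0 ≤ T - t)] at h ⊢
  rcases le_or_gt t S with htS | hSt
  · rw [max_eq_left (by linarith : 0 ≤ S - t)] at h ⊢
    have hdeficit : a * (S - t) < b * (T - t) := by
      refine lt_of_pow_lt_pow_left₀ 2 (by nlinarith) ?_
      calc (a * (S - t)) ^ 2 = a * (a * (S - t) ^ 2) := by ring
        _ ≤ b * (a * (S - t) ^ 2) := by gcongr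
        _ < b * (b * (T - t) ^ 2) := by gcongr
        _ = (b * (T - t)) ^ 2 := by ring
    nlinarith [mul_le_mul_of_nonneg_right hab ht]
  · rw [max_eq_right (by linarith : S - t ≤ 0)]
    nlinarith [mul_le_mul_of_nonneg_right hab (sq_nonneg S), mul_nonneg hb.le (sq_nonneg (t - S)),
      mul_nonneg (mul_nonneg hb.le (sub_nonneg.2 hSt.le)) (sub_nonneg.2 htT.le)]

theorem lag_sub_lag_le {a b S T t : ℝ} (ha : 0 < a) (hab : a ≤ b) (hS : 0 ≤ S) (ht : 0 ≤ t) :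
    lag a S t - lag b T t ≤ max 0 (a / 2 * S ^ 2 - b / 2 * T ^ 2) := by
  rcases le_or_gt (b * max (T - t) 0 ^ 2) (a * max (S - t) 0 ^ 2) with h | h
  · refine le_max_of_le_right ?_
    unfold lag
    linarith
  · exact le_max_of_le_left (sub_nonpos.2 (lag_le_lag_of_remaining_lt ha hab hS ht h))

theorem sq_sub_div_two_mul {v V a : ℝ} (ha : a ≠ 0) :
    (v - V) ^ 2 / (2 * a) = a / 2 * ((V - v) / a) ^ 2 := by
  field_simp
  ring

theorem safe_front_general (xe ve xl vl V Amin Amax L : ℝ)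
    (hAmax : 0 < Amax) (hAmin : 0 < Amin) (hA : Amin ≤ Amax)
    (hveV : ve ≤ V)
    (hinit : xl + L ≤ xe)
    (hstop : (xl - V * 0) - (vl - V) ^ 2 / (2 * Amax) + L
        < (xe - V * 0) - (ve - V) ^ 2 / (2 * Amin)) :
    ∀ t : ℝ, 0 ≤ t → satPos V xe ve Amin t - satPos V xl vl Amax t ≥ L := by
  intro t ht
  rw [satPos_eq_sub_lag hAmin.ne', satPos_eq_sub_lag hAmax.ne']
  rw [sq_sub_div_two_mul hAmin.ne', sq_sub_div_two_mul hAmax.ne'] at hstop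
  have hlag := lag_sub_lag_le (T := (V - vl) / Amax) hAmin hA
    (div_nonneg (sub_nonneg.2 hveV) hAmin.le) ht
  have hmax : max 0 (Amin / 2 * ((V - ve) / Amin) ^ 2 - Amax / 2 * ((V - vl) / Amax) ^ 2)
      ≤ xe - xl - L := max_le (by linarith) (by linarith)
  linarith

/-- Safety when the ego car is ahead: separation is maintained for all time. -/
theorem safe_front (xe ve xl vl V Amin Amax L : ℝ)
    (hV : 0 < V) (hAmax : 0 < Amax) (hAmin : 0 < Amin) (hA : Amin ≤ Amax)
    (hve0 : 0 ≤ ve) (hveV : ve ≤ V) (hvl0 : 0 ≤ vl) (hvlV : vl ≤ V) (hL : 0 < L)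
    (hinit : xl + L ≤ xe)
    (hstop : (xl - V * 0) - (vl - V) ^ 2 / (2 * Amax) + L
        < (xe - V * 0) - (ve - V) ^ 2 / (2 * Amin)) :
    ∀ t : ℝ, 0 ≤ t → satPos V xe ve Amin t - satPos V xl vl Amax t ≥ L :=
  safe_front_general xe ve xl vl V Amin Amax L hAmax hAmin hA hveV hinit hstop
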